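/- The angular coproduct is multiplicative: for all F₁, F₂ ∈ kF_X^a, Δ_a(F₁ ⋄_a F₂) = Δ_a(F₁) ⋄_a Δ_a(F₂), where kF_X^a ⊗ kF_X^a carries the componentwise product (a ⊗ b) ⋄_a (c ⊗ d) = (a ⋄_a c) ⊗ (b ⋄_a d). -/

import Mathlib

set_option linter.unreachableTactic false
set_option linter.unnecessarySeqFocus false
set_option linter.unusedTactic false

/-! Angularly decorated planar rooted trees and forests over a decoration set `X`.
A tree is either the single-vertex tree `•` (leaf) or the grafting `B⁺(F)` of a forest;
a forest is an alternating word `T₁ x₁ T₂ x₂ ⋯ x_{ℓ-1} T_ℓ` of trees and decorations. -/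
mutual
  inductive ATree (X : Type) : Type
    | leaf : ATree X
    | graft : AForest X → ATree X
  inductive AForest (X : Type) : Type
    | single : ATree X → AForest X
    | cons : ATree X → X → AForest X → AForest X
end

mutual
  /-- Depth of an angularly decorated tree. -/
  def ATree.depth {X : Type} : ATree X → ℕ
    | .leaf => 0
    | .graft F => AForest.depth F + 1
  /-- Depth of an angularly decorated forest. -/
  def AForest.depth {X : Type} : AForest X → ℕ
    | .single T => ATree.depth T
    | .cons T _ F => max (ATree.depth T) (AForest.depth F)
end

mutual
  /-- An auxiliary size of an angularly decorated tree. -/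
  def ATree.size {X : Type} : ATree X → ℕ
    | .leaf => 1
    | .graft F => AForest.size F + 1
  /-- An auxiliary size of an angularly decorated forest. -/
  def AForest.size {X : Type} : AForest X → ℕ
    | .single T => ATree.size T + 1
    | .cons T _ F => ATree.size T + AForest.size F + 1
end

mutual
  /-- The number of vertices of an angularly decorated tree. -/
  def ATree.deg {X : Type} : ATree X → ℕ
    | .leaf => 1
    | .graft F => AForest.deg F + 1
  /-- The number of vertices of an angularly decorated forest. -/
  def AForest.deg {X : Type} : AForest X → ℕ
    | .single T => ATree.deg T
    | .cons T _ F => ATree.deg T + AForest.deg F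
end

/-- Auxiliary lemma for termination proofs. -/
theorem natlex_of_le_of_lt {a₁ a₂ b₁ b₂ : ℕ} (h1 : a₁ ≤ a₂) (h2 : b₁ < b₂) :
    Prod.Lex (fun x y : ℕ => x < y) (fun x y : ℕ => x < y) (a₁, b₁) (a₂, b₂) := by
  rcases lt_or_eq_of_le h1 with h | rfl
  · exact Prod.Lex.left _ _ h
  · exact Prod.Lex.right _ h2

/-- `RBF k X` is the free `k`-module on the set of angularly decorated rooted forests. -/
abbrev RBF (k X : Type) [CommRing k] := AForest X →₀ k

mutual
  /-- The product `⋄ₐ` on basis trees (with values in the free module on trees). -/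
  noncomputable def mulT {k X : Type} [CommRing k] (lam : k) :
      ATree X → ATree X → (ATree X →₀ k)
    | .leaf, T' => Finsupp.single T' 1
    | T, .leaf => Finsupp.single T 1
    | .graft F, .graft F' =>
        Finsupp.mapDomain ATree.graft (mulF lam (.single (.graft F)) F')
          + Finsupp.mapDomain ATree.graft (mulF lam F (.single (.graft F')))
          + lam • Finsupp.mapDomain ATree.graft (mulF lam F F')
  termination_by T T' => (ATree.depth T + ATree.depth T', ATree.size T + ATree.size T')
  decreasing_by
    all_goals
      first
        | (apply Prod.Lex.left
           simp [ATree.depth, AForest.depth] <;> omega)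
        | (apply natlex_of_le_of_lt <;>
            simp [ATree.depth, AForest.depth, ATree.size, AForest.size] <;>
            omega)
  /-- The product `⋄ₐ` on basis forests. -/
  noncomputable def mulF {k X : Type} [CommRing k] (lam : k) :
      AForest X → AForest X → RBF k X
    | .single T, .single T' => Finsupp.mapDomain AForest.single (mulT lam T T')
    | .single T, .cons T' y G' =>
        Finsupp.mapDomain (fun t => AForest.cons t y G') (mulT lam T T')
    | .cons T x G, F' => Finsupp.mapDomain (fun g => AForest.cons T x g) (mulF lam G F')
  termination_by F F' => (AForest.depth F + AForest.depth F', AForest.size F + AForest.size F')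
  decreasing_by
    all_goals
      first
        | (apply Prod.Lex.left
           simp [ATree.depth, AForest.depth] <;> omega)
        | (apply natlex_of_le_of_lt <;>
            simp [ATree.depth, AForest.depth, ATree.size, AForest.size] <;>
            omega)
end

open scoped TensorProduct

variable {k X : Type} [CommRing k]

/-- The unit `•` of the Rota-Baxter algebra `kF_X^a`: the single-vertex tree. -/
noncomputable def RBF.one : RBF k X := Finsupp.single (AForest.single ATree.leaf) 1

/-- The canonical basis inclusion of forests into `kF_X^a`. -/
noncomputable def RBF.of (F : AForest X) : RBF k X := Finsupp.single F 1

/-- The natural map `i_X : X → kF_X^a`, `x ↦ • x •`. -/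
noncomputable def RBF.iX (x : X) : RBF k X :=
  RBF.of (AForest.cons ATree.leaf x (AForest.single ATree.leaf))

/-- The grafting operator `B⁺` as a `k`-linear operator on `kF_X^a`. -/
noncomputable def RBF.Bplus : RBF k X →ₗ[k] RBF k X :=
  Finsupp.lmapDomain k k (fun F => AForest.single (ATree.graft F))

/-- The multiplication `⋄ₐ` on `kF_X^a` as a `k`-bilinear map. -/
noncomputable def RBF.mul (lam : k) : RBF k X →ₗ[k] RBF k X →ₗ[k] RBF k X :=
  Finsupp.lift _ k _ fun F => Finsupp.lift _ k _ fun F' => mulF lam F F'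

/-- Concatenation of two forests with the angle between them decorated by `x`. -/
def concatA (x : X) : AForest X → AForest X → AForest X
  | .single T, F' => .cons T x F'
  | .cons T y G, F' => .cons T y (concatA x G F')

/-- Concatenation with middle angle decorated by `x`, as a bilinear map on `kF_X^a`. -/
noncomputable def RBF.concat (x : X) : RBF k X →ₗ[k] RBF k X →ₗ[k] RBF k X :=
  Finsupp.lift _ k _ fun F => Finsupp.lift _ k _ fun F' => RBF.of (concatA x F F')

/-- Given two bilinear maps `f g` on a module `M`, the bilinear map on `M ⊗ M` sending
`(a ⊗ b, c ⊗ d)` to `f a c ⊗ g b d`. -/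
noncomputable def mixMap {M : Type} [AddCommGroup M] [Module k M]
    (f g : M →ₗ[k] M →ₗ[k] M) :
    (M ⊗[k] M) →ₗ[k] (M ⊗[k] M) →ₗ[k] (M ⊗[k] M) :=
  TensorProduct.curry
    ((TensorProduct.map (TensorProduct.lift f) (TensorProduct.lift g)).comp
      (TensorProduct.tensorTensorTensorComm k M M M M).toLinearMap)

mutual
  /-- The angular coproduct of a basis tree: the sum of `cl(H) ⊗ T/H` over all
  subforests `H ⊑ T` (sequences of mutually disjoint full subtrees and bare angular
  decorations in planar order). -/
  noncomputable def coT (lam : k) : ATree X → RBF k X ⊗[k] RBF k X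
    | .leaf => RBF.one ⊗ₜ[k] RBF.one
    | .graft F => (RBF.of (AForest.single (ATree.graft F))) ⊗ₜ[k] RBF.one
        + (LinearMap.lTensor (RBF k X) RBF.Bplus) (coF lam F)
  /-- The angular coproduct of a basis forest: the sum of `cl(H) ⊗ F/H` over all
  subforests `H ⊑ F`. -/
  noncomputable def coF (lam : k) : AForest X → RBF k X ⊗[k] RBF k X
    | .single T => coT lam T
    | .cons T x G =>
        mixMap (RBF.concat x) (RBF.mul lam) (coT lam T) (coF lam G)
          + mixMap (RBF.mul lam) (RBF.concat x) (coT lam T) (coF lam G)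
end

/-- The angular coproduct `Δₐ : kF_X^a → kF_X^a ⊗ kF_X^a`,
`Δₐ(F) = Σ_{H ⊑ F} cl(H) ⊗ F/H`. -/
noncomputable def RBF.Delta (lam : k) : RBF k X →ₗ[k] RBF k X ⊗[k] RBF k X :=
  Finsupp.lift _ k _ fun F => coF lam F

/-- The counit `εₐ : kF_X^a → k` sending the single-vertex tree `•` to `1` and every
other forest to `0`. -/
noncomputable def RBF.eps : RBF k X →ₗ[k] k :=
  Finsupp.lift _ k _ fun F =>
    match F with
    | .single .leaf => (1 : k)
    | _ => 0

/-- The unit map `u : k → kF_X^a`, `c ↦ c •`. -/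
noncomputable def RBF.unit : k →ₗ[k] RBF k X :=
  LinearMap.toSpanSingleton k (RBF k X) RBF.one


/-!
Both sides are bilinear, so it suffices to compare them on two forests, by recursion on their
total size. A forest with several trees is a concatenation `T x G`, and `Δₐ` obeys a Leibniz rule
for concatenation: `Δₐ(a x b)` is the sum of the two componentwise products of `Δₐa` and `Δₐb` in
which one tensor factor is concatenated at `x` and the other multiplied by `⋄ₐ`. With
associativity of `⋄ₐ` and `(a x b) ⋄ₐ c = a x (b ⋄ₐ c)`, `a ⋄ₐ (b x c) = (a ⋄ₐ b) x c`, this moves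
the product past the outer trees. For two trees `B⁺F₀, B⁺F₁`, the operator `B⁺` is Rota–Baxter
of weight `λ` and `Δₐ` is a `B⁺`-cocycle, `Δₐ ∘ B⁺ = B⁺(·) ⊗ • + (id ⊗ B⁺) ∘ Δₐ`; as `id ⊗ B⁺` is
again Rota–Baxter for the componentwise product, the claim reduces to `B⁺F₀ ⋄ₐ F₁`,
`F₀ ⋄ₐ B⁺F₁` and `F₀ ⋄ₐ F₁`. Associativity of `⋄ₐ` is proved by the same recursion.
-/

open TensorProduct

section RotaBaxter

variable {M : Type} [AddCommGroup M] [Module k M]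

@[simp]
theorem mixMap_tmul (f g : M →ₗ[k] M →ₗ[k] M) (a b c d : M) :
    mixMap f g (a ⊗ₜ b) (c ⊗ₜ d) = f a c ⊗ₜ g b d := by
  simp [mixMap]

theorem mixMap_assoc {f₁ f₂ f₃ f₄ g₁ g₂ g₃ g₄ : M →ₗ[k] M →ₗ[k] M}
    (hf : ∀ a b c, f₁ (f₂ a b) c = f₃ a (f₄ b c)) (hg : ∀ a b c, g₁ (g₂ a b) c = g₃ a (g₄ b c))
    (U V W : M ⊗[k] M) :
    mixMap f₁ g₁ (mixMap f₂ g₂ U V) W = mixMap f₃ g₃ U (mixMap f₄ g₄ V W) := by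
  induction U using TensorProduct.induction_on with
  | zero => simp
  | add U U' hU hU' => simp only [map_add, LinearMap.add_apply, hU, hU']
  | tmul a a' =>
    induction V using TensorProduct.induction_on with
    | zero => simp
    | add V V' hV hV' => simp only [map_add, LinearMap.add_apply, hV, hV']
    | tmul b b' =>
      induction W using TensorProduct.induction_on with
      | zero => simp
      | add W W' hW hW' => simp only [map_add, hW, hW']
      | tmul c c' => simp only [mixMap_tmul, hf, hg]

theorem mixMap_tmul_self_left {f g : M →ₗ[k] M →ₗ[k] M} {e : M} (hf : ∀ a, f e a = a)
    (hg : ∀ a, g e a = a) (U : M ⊗[k] M) : mixMap f g (e ⊗ₜ e) U = U := by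
  induction U using TensorProduct.induction_on with
  | zero => simp
  | add U U' hU hU' => rw [map_add, hU, hU']
  | tmul a b => rw [mixMap_tmul, hf, hg]

theorem mixMap_tmul_self_right {f g : M →ₗ[k] M →ₗ[k] M} {e : M} (hf : ∀ a, f a e = a)
    (hg : ∀ a, g a e = a) (U : M ⊗[k] M) : mixMap f g U (e ⊗ₜ e) = U := by
  induction U using TensorProduct.induction_on with
  | zero => simp
  | add U U' hU hU' => rw [map_add, LinearMap.add_apply, hU, hU']
  | tmul a b => rw [mixMap_tmul, hf, hg]

theorem mixMap_tmul_lTensor {f g : M →ₗ[k] M →ₗ[k] M} {e : M} (hg : ∀ a, g e a = a)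
    (P : M →ₗ[k] M) (a : M) (U : M ⊗[k] M) :
    mixMap f g (a ⊗ₜ e) (P.lTensor M U) = P.lTensor M (mixMap f g (a ⊗ₜ e) U) := by
  induction U using TensorProduct.induction_on with
  | zero => simp
  | add U U' hU hU' => simp only [map_add, hU, hU']
  | tmul b c => simp only [LinearMap.lTensor_tmul, mixMap_tmul, hg]

theorem mixMap_lTensor_tmul {f g : M →ₗ[k] M →ₗ[k] M} {e : M} (hg : ∀ a, g a e = a)
    (P : M →ₗ[k] M) (a : M) (U : M ⊗[k] M) :
    mixMap f g (P.lTensor M U) (a ⊗ₜ e) = P.lTensor M (mixMap f g U (a ⊗ₜ e)) := by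
  induction U using TensorProduct.induction_on with
  | zero => simp
  | add U U' hU hU' => simp only [map_add, LinearMap.add_apply, hU, hU']
  | tmul b c => simp only [LinearMap.lTensor_tmul, mixMap_tmul, hg]

def IsRotaBaxter (μ : M →ₗ[k] M →ₗ[k] M) (P : M →ₗ[k] M) (lam : k) : Prop :=
  ∀ a b, μ (P a) (P b) = P (μ (P a) b) + P (μ a (P b)) + lam • P (μ a b)

namespace IsRotaBaxter

variable {μ : M →ₗ[k] M →ₗ[k] M} {P : M →ₗ[k] M} {lam : k}

theorem mul_eq_apply (h : IsRotaBaxter μ P lam) (a b : M) :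
    μ (P a) (P b) = P (μ (P a) b + μ a (P b) + lam • μ a b) := by
  rw [h, map_add, map_add, map_smul]

theorem assoc_apply (h : IsRotaBaxter μ P lam) {u v w : M}
    (h₁ : μ (μ (P u) (P v)) w = μ (P u) (μ (P v) w))
    (h₂ : μ (μ (P u) v) (P w) = μ (P u) (μ v (P w)))
    (h₃ : μ (μ u (P v)) (P w) = μ u (μ (P v) (P w)))
    (h₄ : μ (μ u v) (P w) = μ u (μ v (P w)))
    (h₅ : μ (μ (P u) v) w = μ (P u) (μ v w))
    (h₆ : μ (μ u (P v)) w = μ u (μ (P v) w))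
    (h₇ : μ (μ u v) w = μ u (μ v w)) :
    μ (μ (P u) (P v)) (P w) = μ (P u) (μ (P v) (P w)) := by
  rw [h.mul_eq_apply u v, h, ← h.mul_eq_apply u v, h₁, h.mul_eq_apply v w, h,
    ← h.mul_eq_apply v w]
  simp only [map_add, map_smul, LinearMap.add_apply, LinearMap.smul_apply, smul_add]
  rw [h₂, h₃, h₄, h₅, h₆, h₇]
  module

theorem lTensor (h : IsRotaBaxter μ P lam) (f : M →ₗ[k] M →ₗ[k] M) :
    IsRotaBaxter (mixMap f μ) (P.lTensor M) lam := by
  intro U V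
  induction U using TensorProduct.induction_on with
  | zero => simp
  | add U U' hU hU' =>
    simp only [map_add, LinearMap.add_apply, hU, hU']
    module
  | tmul a b =>
    induction V using TensorProduct.induction_on with
    | zero => simp
    | add V V' hV hV' =>
      simp only [map_add, hV, hV']
      module
    | tmul c d =>
      simp only [LinearMap.lTensor_tmul, mixMap_tmul, h b d, tmul_add, tmul_smul]

theorem map_mul_of_cocycle (h : IsRotaBaxter μ P lam) {e : M} (hone_mul : ∀ a, μ e a = a)
    (hmul_one : ∀ a, μ a e = a) {Δ : M →ₗ[k] M ⊗[k] M}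
    (hΔ : ∀ a, Δ (P a) = P a ⊗ₜ e + P.lTensor M (Δ a)) {u v : M}
    (h₁ : Δ (μ (P u) v) = mixMap μ μ (Δ (P u)) (Δ v))
    (h₂ : Δ (μ u (P v)) = mixMap μ μ (Δ u) (Δ (P v)))
    (h₃ : Δ (μ u v) = mixMap μ μ (Δ u) (Δ v)) :
    Δ (μ (P u) (P v)) = mixMap μ μ (Δ (P u)) (Δ (P v)) := by
  rw [h.mul_eq_apply, hΔ, ← h.mul_eq_apply]
  simp only [map_add, map_smul, h₁, h₂, h₃]
  rw [hΔ u, hΔ v]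
  simp only [map_add, LinearMap.add_apply, mixMap_tmul, hone_mul, mixMap_tmul_lTensor hone_mul,
    mixMap_lTensor_tmul hmul_one, h.lTensor μ _ _]
  module

end IsRotaBaxter

end RotaBaxter

theorem AForest.size_pos (F : AForest X) : 0 < F.size := by
  cases F <;> simp [AForest.size]

theorem concatA_assoc (x y : X) :
    ∀ A B C : AForest X, concatA x (concatA y A B) C = concatA y A (concatA x B C)
  | .single _, _, _ => rfl
  | .cons T z G, B, C => congrArg (AForest.cons T z) (concatA_assoc x y G B C)

namespace RBF

open Finsupp

variable {lam : k}

@[simp]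
theorem mul_of (F F' : AForest X) : RBF.mul lam (of F) (of F') = mulF lam F F' := by
  simp [RBF.mul, of]

@[simp]
theorem concat_of (x : X) (F F' : AForest X) :
    RBF.concat x (of F) (of F') = (of (concatA x F F') : RBF k X) := by
  simp [RBF.concat, of]

@[simp]
theorem Delta_of (F : AForest X) : RBF.Delta lam (of F) = coF lam F := by
  simp [RBF.Delta, of]

theorem Bplus_of (F : AForest X) : Bplus (of F) = (of (.single (.graft F)) : RBF k X) := by
  simp [Bplus, of]

theorem one_eq_of : (RBF.one : RBF k X) = of (.single .leaf) := rfl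

theorem of_cons (T : ATree X) (x : X) (G : AForest X) :
    (of (.cons T x G) : RBF k X) = RBF.concat x (of (.single T)) (of G) := by
  rw [concat_of]
  rfl

theorem single_eq_smul_of (F : AForest X) (c : k) : single F c = c • (of F : RBF k X) := by
  simp [of]

theorem concat_single_left (x : X) (T : ATree X) (w : RBF k X) :
    RBF.concat x (of (.single T)) w = mapDomain (AForest.cons T x) w := by
  induction w using Finsupp.induction_linear with
  | zero => simp
  | add w w' hw hw' => simp only [map_add, mapDomain_add, hw, hw']
  | single F c =>
    rw [single_eq_smul_of, map_smul, concat_of, mapDomain_smul]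
    simp [of, concatA]

theorem concat_mapDomain_single (y : X) (Z : ATree X →₀ k) (G : AForest X) :
    RBF.concat y (mapDomain AForest.single Z) (of G) = mapDomain (fun T => .cons T y G) Z := by
  induction Z using Finsupp.induction_linear with
  | zero => simp
  | add Z Z' hZ hZ' => simp only [map_add, mapDomain_add, LinearMap.add_apply, hZ, hZ']
  | single T c =>
    rw [mapDomain_single, single_eq_smul_of, map_smul, LinearMap.smul_apply, concat_of,
      mapDomain_single]
    simp [of, concatA]

theorem mulF_leaf_left (F : AForest X) : mulF lam (.single .leaf) F = of F := by
  cases F <;> simp [mulF, mulT, of]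

theorem mulF_leaf_right : ∀ F : AForest X, mulF lam F (.single .leaf) = of F
  | .single .leaf => by simp [mulF, mulT, of]
  | .single (.graft F) => by simp [mulF, mulT, of]
  | .cons T x G => by rw [mulF, mulF_leaf_right G]; simp [of]

theorem mulF_cons_left (T : ATree X) (x : X) (G F : AForest X) :
    mulF lam (.cons T x G) F = RBF.concat x (of (.single T)) (mulF lam G F) := by
  rw [mulF, concat_single_left]

theorem mulF_single_cons (T T' : ATree X) (y : X) (G : AForest X) :
    mulF lam (.single T) (.cons T' y G)
      = RBF.concat y (mulF lam (.single T) (.single T')) (of G) := by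
  rw [mulF, mulF, concat_mapDomain_single]

theorem mulF_graft_graft (F F' : AForest X) :
    mulF lam (.single (.graft F)) (.single (.graft F'))
      = Bplus (mulF lam (.single (.graft F)) F') + Bplus (mulF lam F (.single (.graft F')))
        + lam • Bplus (mulF lam F F') := by
  simp only [mulF, mulT, mapDomain_add, mapDomain_smul, Bplus, lmapDomain_apply,
    ← mapDomain_comp]
  rfl

theorem one_mul (a : RBF k X) : RBF.mul lam RBF.one a = a := by
  induction a using Finsupp.induction_linear <;>
    simp_all [single_eq_smul_of, one_eq_of, mulF_leaf_left]

theorem mul_one (a : RBF k X) : RBF.mul lam a RBF.one = a := by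
  induction a using Finsupp.induction_linear <;>
    simp_all [single_eq_smul_of, one_eq_of, mulF_leaf_right]

theorem isRotaBaxter_Bplus : IsRotaBaxter (RBF.mul lam) (Bplus : RBF k X →ₗ[k] RBF k X) lam := by
  intro a b
  induction a using Finsupp.induction_linear with
  | zero => simp
  | add a a' ha ha' =>
    simp only [map_add, LinearMap.add_apply, ha, ha']
    module
  | single F c =>
    induction b using Finsupp.induction_linear with
    | zero => simp
    | add b b' hb hb' =>
      simp only [map_add, hb, hb']
      module
    | single F' c' =>
      simp only [single_eq_smul_of, map_smul, LinearMap.smul_apply, Bplus_of, mul_of,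
        mulF_graft_graft]
      module

theorem concat_assoc (x y : X) (a b c : RBF k X) :
    RBF.concat x (RBF.concat y a b) c = RBF.concat y a (RBF.concat x b c) := by
  induction a using Finsupp.induction_linear <;> induction b using Finsupp.induction_linear <;>
    induction c using Finsupp.induction_linear <;>
    simp_all [single_eq_smul_of, smul_smul, mul_comm, mul_left_comm, concatA_assoc]

theorem mulF_concatA_left (x : X) :
    ∀ A B C : AForest X, mulF lam (concatA x A B) C = RBF.concat x (of A) (mulF lam B C)
  | .single T, B, C => mulF_cons_left T x B C
  | .cons T z G, B, C => by
    rw [concatA, mulF_cons_left, mulF_concatA_left x G B C, ← concat_assoc, concat_of]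
    rfl

theorem mulF_concatA_right (y : X) :
    ∀ A B C : AForest X, mulF lam A (concatA y B C) = RBF.concat y (mulF lam A B) (of C)
  | .cons T x G, B, C => by
    rw [mulF_cons_left, mulF_concatA_right y G B C, mulF_cons_left, concat_assoc]
  | .single T, .single T', C => mulF_single_cons T T' y C
  | .single T, .cons T' z G, C => by
    rw [concatA, mulF_single_cons, mulF_single_cons, ← concat_of, concat_assoc]

theorem mul_concat_left (x : X) (a b c : RBF k X) :
    RBF.mul lam (RBF.concat x a b) c = RBF.concat x a (RBF.mul lam b c) := by
  induction a using Finsupp.induction_linear <;> induction b using Finsupp.induction_linear <;>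
    induction c using Finsupp.induction_linear <;>
    simp_all [single_eq_smul_of, smul_smul, mul_comm, mul_left_comm, mulF_concatA_left]

theorem mul_concat_right (y : X) (a b c : RBF k X) :
    RBF.mul lam a (RBF.concat y b c) = RBF.concat y (RBF.mul lam a b) c := by
  induction a using Finsupp.induction_linear <;> induction b using Finsupp.induction_linear <;>
    induction c using Finsupp.induction_linear <;>
    simp_all [single_eq_smul_of, smul_smul, mul_comm, mul_left_comm, mulF_concatA_right]

theorem mul_assoc_of :
    ∀ A B C : AForest X, RBF.mul lam (RBF.mul lam (of A) (of B)) (of C)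
      = RBF.mul lam (of A) (RBF.mul lam (of B) (of C))
  | .cons T x G, B, C => by
    rw [of_cons, mul_concat_left, mul_concat_left, mul_assoc_of G B C, mul_concat_left]
  | .single T, .cons T' y G, C => by
    rw [of_cons, mul_concat_right, mul_concat_left, mul_concat_left, mul_concat_right]
  | .single T, .single T', .cons T'' z G => by
    rw [of_cons, mul_concat_right, mul_concat_right, mul_concat_right,
      mul_assoc_of (.single T) (.single T') (.single T'')]
  | .single .leaf, _, _ => by rw [← one_eq_of, one_mul, one_mul]
  | .single (.graft _), .single .leaf, _ => by rw [← one_eq_of, mul_one, one_mul]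
  | .single (.graft _), .single (.graft _), .single .leaf => by
    rw [← one_eq_of, mul_one, mul_one]
  | .single (.graft F₀), .single (.graft F₁), .single (.graft F₂) => by
    rw [← Bplus_of F₀, ← Bplus_of F₁, ← Bplus_of F₂]
    refine isRotaBaxter_Bplus.assoc_apply ?_ ?_ ?_ ?_ ?_ ?_ (mul_assoc_of F₀ F₁ F₂) <;>
      simp only [Bplus_of]
    exacts [mul_assoc_of _ _ _, mul_assoc_of _ _ _, mul_assoc_of _ _ _, mul_assoc_of _ _ _,
      mul_assoc_of _ _ _, mul_assoc_of _ _ _]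
termination_by A B C => A.size + B.size + C.size
decreasing_by
  all_goals simp only [AForest.size, ATree.size]
  all_goals grind [AForest.size_pos]

theorem mul_assoc (a b c : RBF k X) :
    RBF.mul lam (RBF.mul lam a b) c = RBF.mul lam a (RBF.mul lam b c) := by
  induction a using Finsupp.induction_linear <;> induction b using Finsupp.induction_linear <;>
    induction c using Finsupp.induction_linear <;>
    simp_all [single_eq_smul_of, smul_smul, mul_comm, mul_left_comm, mul_assoc_of, -mul_of]

theorem Delta_one : RBF.Delta lam (RBF.one : RBF k X) = RBF.one ⊗ₜ RBF.one := by
  simp only [one_eq_of, Delta_of, coF, coT]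

theorem Delta_Bplus (a : RBF k X) :
    RBF.Delta lam (Bplus a) = Bplus a ⊗ₜ RBF.one + Bplus.lTensor (RBF k X) (RBF.Delta lam a) := by
  induction a using Finsupp.induction_linear with
  | zero => simp
  | add a a' ha ha' =>
    simp only [map_add, add_tmul, ha, ha']
    abel
  | single F c =>
    simp only [single_eq_smul_of, map_smul, Bplus_of, Delta_of, coF, coT, smul_add, smul_tmul']

theorem coF_concatA (x : X) :
    ∀ A B : AForest X, coF lam (concatA x A B)
      = mixMap (RBF.concat x) (RBF.mul lam) (coF lam A) (coF lam B)
        + mixMap (RBF.mul lam) (RBF.concat x) (coF lam A) (coF lam B)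
  | .single T, B => by rw [concatA, coF, coF]
  | .cons T z G, B => by
    have concat_mul := fun a b c => (mul_concat_right (lam := lam) x a b c).symm
    rw [concatA, coF, coF_concatA x G B, coF]
    simp only [map_add, LinearMap.add_apply]
    rw [mixMap_assoc (concat_assoc x z) (RBF.mul_assoc (lam := lam)),
      mixMap_assoc concat_mul (mul_concat_left z), mixMap_assoc (mul_concat_left z) concat_mul,
      mixMap_assoc (RBF.mul_assoc (lam := lam)) (concat_assoc x z)]
    abel

theorem Delta_concat (x : X) (a b : RBF k X) :
    RBF.Delta lam (RBF.concat x a b)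
      = mixMap (RBF.concat x) (RBF.mul lam) (RBF.Delta lam a) (RBF.Delta lam b)
        + mixMap (RBF.mul lam) (RBF.concat x) (RBF.Delta lam a) (RBF.Delta lam b) := by
  induction a using Finsupp.induction_linear with
  | zero => simp
  | add a a' ha ha' =>
    simp only [map_add, LinearMap.add_apply, ha, ha']
    abel
  | single A c =>
    induction b using Finsupp.induction_linear with
    | zero => simp
    | add b b' hb hb' =>
      simp only [map_add, hb, hb']
      abel
    | single B d =>
      simp only [single_eq_smul_of, map_smul, LinearMap.smul_apply, concat_of, Delta_of,
        coF_concatA, smul_add]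

theorem Delta_mul_of :
    ∀ A B : AForest X, RBF.Delta lam (RBF.mul lam (of A) (of B))
      = mixMap (RBF.mul lam) (RBF.mul lam) (RBF.Delta lam (of A)) (RBF.Delta lam (of B))
  | .cons T x G, B => by
    rw [of_cons, mul_concat_left, Delta_concat, Delta_mul_of G B, Delta_concat, map_add,
      LinearMap.add_apply, mixMap_assoc (mul_concat_left x) (RBF.mul_assoc (lam := lam)),
      mixMap_assoc (RBF.mul_assoc (lam := lam)) (mul_concat_left x)]
  | .single T, .cons T' y G => by
    have concat_mul := fun a b c => (mul_concat_right (lam := lam) y a b c).symm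
    rw [of_cons, mul_concat_right, Delta_concat, Delta_mul_of (.single T) (.single T'),
      Delta_concat, map_add, mixMap_assoc concat_mul (RBF.mul_assoc (lam := lam)),
      mixMap_assoc (RBF.mul_assoc (lam := lam)) concat_mul]
  | .single .leaf, .single _ => by
    rw [← one_eq_of, one_mul, Delta_one, mixMap_tmul_self_left one_mul one_mul]
  | .single (.graft _), .single .leaf => by
    rw [← one_eq_of, mul_one, Delta_one, mixMap_tmul_self_right mul_one mul_one]
  | .single (.graft F₀), .single (.graft F₁) => by
    rw [← Bplus_of F₀, ← Bplus_of F₁]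
    refine isRotaBaxter_Bplus.map_mul_of_cocycle one_mul mul_one Delta_Bplus ?_ ?_
      (Delta_mul_of F₀ F₁) <;> simp only [Bplus_of]
    exacts [Delta_mul_of _ _, Delta_mul_of _ _]
termination_by A B => A.size + B.size
decreasing_by
  all_goals simp only [AForest.size, ATree.size]
  all_goals grind [AForest.size_pos]

end RBF

/-- The angular coproduct is multiplicative: for all
`F₁, F₂ ∈ kF_X^a`, `Δₐ(F₁ ⋄ₐ F₂) = Δₐ(F₁) ⋄ₐ Δₐ(F₂)`, where `kF_X^a ⊗ kF_X^a` carries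
the componentwise product `(a ⊗ b) ⋄ₐ (c ⊗ d) = (a ⋄ₐ c) ⊗ (b ⋄ₐ d)`. -/
theorem angular_coproduct_multiplicative (k X : Type) [CommRing k] (lam : k)
    (a b : RBF k X) :
    RBF.Delta lam (RBF.mul lam a b)
      = mixMap (RBF.mul lam) (RBF.mul lam) (RBF.Delta lam a) (RBF.Delta lam b) := by
  induction a using Finsupp.induction_linear with
  | zero => simp
  | add a a' ha ha' => simp only [map_add, LinearMap.add_apply, ha, ha']
  | single A c =>
    induction b using Finsupp.induction_linear with
    | zero => simp
    | add b b' hb hb' => simp only [map_add, hb, hb']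
    | single B d =>
      simp only [RBF.single_eq_smul_of, map_smul, LinearMap.smul_apply, RBF.Delta_mul_of]
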